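/- arXiv:1510.07247 — 5 statements merged into one kernel-verified Lean document; each statement's English description precedes it below -/
import Mathlib

section
/- The until-induction rule (U-ind) is derivable in the Hilbert system LTL: if χ → (¬ψ ∧ ○χ) is derivable in LTL, then χ → ¬(φUψ) is derivable in LTL. -/
/-- Temporal formulas: φ ::= P | ⊥ | φ→φ | ○φ | □φ | φUψ. -/
inductive TFml : Type
  | atom : ℕ → TFml
  | bot : TFml
  | imp : TFml → TFml → TFml
  | next : TFml → TFml
  | always : TFml → TFml
  | untl : TFml → TFml → TFml

namespace TFml

/-- ¬φ := φ → ⊥ -/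
def neg (φ : TFml) : TFml := φ.imp bot
/-- φ ∨ ψ := ¬φ → ψ -/
def or' (φ ψ : TFml) : TFml := (neg φ).imp ψ
/-- φ ∧ ψ := ¬(¬φ ∨ ¬ψ) -/
def and' (φ ψ : TFml) : TFml := neg (or' (neg φ) (neg ψ))
/-- φ ↔ ψ := (φ → ψ) ∧ (ψ → φ) -/
def iff' (φ ψ : TFml) : TFml := and' (φ.imp ψ) (ψ.imp φ)
/-- ◇φ := ¬□¬φ -/
def diam (φ : TFml) : TFml := neg (always (neg φ))

/-- Propositional tautologies: true under every valuation that interprets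
⊥ and → classically (all other formulas are treated as atoms). -/
def Tautology (φ : TFml) : Prop :=
  ∀ v : TFml → Prop, ¬ v bot → (∀ α β, v (imp α β) ↔ (v α → v β)) → v φ

/-- The Hilbert system LTL. -/
inductive LTL : TFml → Prop
  | taut {φ : TFml} : Tautology φ → LTL φ
  | nextK (φ ψ : TFml) : LTL ((next (φ.imp ψ)).imp ((next φ).imp (next ψ)))
  | alwaysK (φ ψ : TFml) : LTL ((always (φ.imp ψ)).imp ((always φ).imp (always ψ)))
  | funAx (φ : TFml) : LTL (iff' (next (neg φ)) (neg (next φ)))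
  | mix (φ : TFml) : LTL ((always φ).imp (and' φ (next (always φ))))
  | ind (φ : TFml) : LTL ((always (φ.imp (next φ))).imp (φ.imp (always φ)))
  | u1 (φ ψ : TFml) : LTL ((untl φ ψ).imp (diam ψ))
  | u2 (φ ψ : TFml) : LTL (iff' (untl φ ψ) (or' ψ (and' φ (next (untl φ ψ)))))
  | mp {φ ψ : TFml} : LTL (φ.imp ψ) → LTL φ → LTL ψ
  | nextNec {φ : TFml} : LTL φ → LTL (next φ)
  | alwaysNec {φ : TFml} : LTL φ → LTL (always φ)

end TFml

/-!
From χ → ○χ the induction axiom gives χ → □χ, hence χ → □¬ψ; but by (U1) φUψ implies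
◇ψ = ¬□¬ψ, so χ refutes φUψ.
-/

namespace TFml.LTL

variable {A B C : TFml}

theorem mp_of_tautology (hAB : Tautology (A.imp B)) (hA : LTL A) : LTL B :=
  mp (taut hAB) hA

theorem mp₂_of_tautology (hABC : Tautology (A.imp (B.imp C))) (hA : LTL A) (hB : LTL B) :
    LTL C :=
  mp (mp_of_tautology hABC hA) hB

theorem imp_left_of_imp_and (h : LTL (A.imp (and' B C))) : LTL (A.imp B) := by
  refine mp_of_tautology (fun v _ hv => ?_) h
  simp only [and', or', neg, hv]
  tauto

theorem imp_right_of_imp_and (h : LTL (A.imp (and' B C))) : LTL (A.imp C) := by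
  refine mp_of_tautology (fun v _ hv => ?_) h
  simp only [and', or', neg, hv]
  tauto

theorem imp_trans (hAB : LTL (A.imp B)) (hBC : LTL (B.imp C)) : LTL (A.imp C) := by
  refine mp₂_of_tautology (fun v _ hv => ?_) hAB hBC
  simp only [hv]
  tauto

theorem imp_neg_of_imp_of_imp_neg (hA : LTL (A.imp B)) (hC : LTL (C.imp (neg B))) :
    LTL (A.imp (neg C)) := by
  refine mp₂_of_tautology (fun v _ hv => ?_) hA hC
  simp only [neg, hv]
  tauto

theorem always_imp_always (h : LTL (A.imp B)) : LTL ((always A).imp (always B)) :=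
  mp (alwaysK A B) (alwaysNec h)

theorem imp_always_of_imp_next (h : LTL (A.imp (next A))) : LTL (A.imp (always A)) :=
  mp (ind A) (alwaysNec h)

end TFml.LTL

theorem ltl_until_induction_rule (χ φ ψ : TFml)
    (h : TFml.LTL (χ.imp (TFml.and' (TFml.neg ψ) (TFml.next χ)))) :
    TFml.LTL (χ.imp (TFml.neg (TFml.untl φ ψ))) := by
  have hnext : (χ.imp χ.next).LTL := TFml.LTL.imp_right_of_imp_and h
  have hnotψ : (χ.imp ψ.neg).LTL := TFml.LTL.imp_left_of_imp_and h
  have halways : (χ.imp ψ.neg.always).LTL :=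
    .imp_trans (.imp_always_of_imp_next hnext) (.always_imp_always hnotψ)
  exact .imp_neg_of_imp_of_imp_neg halways (.u1 φ ψ)
end

section
/- In the alternative Hilbert system LTL^alt, the axiom (mix) is derivable: for every formula φ, the formula □φ → (φ ∧ ○□φ) is derivable in LTL^alt, where ◇φ := ⊤Uφ and □φ := ¬◇¬φ. -/
/-- Temporal formulas without primitive □: φ ::= P | ⊥ | φ→φ | ○φ | φUψ. -/
inductive AFml : Type
  | atom : ℕ → AFml
  | bot : AFml
  | imp : AFml → AFml → AFml
  | next : AFml → AFml
  | untl : AFml → AFml → AFml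

namespace AFml

/-- ¬φ := φ → ⊥ -/
def neg (φ : AFml) : AFml := φ.imp bot
/-- ⊤ := ¬⊥ -/
def top : AFml := neg bot
/-- φ ∨ ψ := ¬φ → ψ -/
def or' (φ ψ : AFml) : AFml := (neg φ).imp ψ
/-- φ ∧ ψ := ¬(¬φ ∨ ¬ψ) -/
def and' (φ ψ : AFml) : AFml := neg (or' (neg φ) (neg ψ))
/-- φ ↔ ψ := (φ → ψ) ∧ (ψ → φ) -/
def iff' (φ ψ : AFml) : AFml := and' (φ.imp ψ) (ψ.imp φ)
/-- ◇φ := ⊤ U φ -/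
def diam (φ : AFml) : AFml := untl top φ
/-- □φ := ¬◇¬φ = ¬(⊤ U ¬φ) -/
def always (φ : AFml) : AFml := neg (diam (neg φ))

/-- Propositional tautologies: true under every valuation that interprets
⊥ and → classically (all other formulas are treated as atoms). -/
def Tautology (φ : AFml) : Prop :=
  ∀ v : AFml → Prop, ¬ v bot → (∀ α β, v (imp α β) ↔ (v α → v β)) → v φ

/-- The alternative Hilbert system LTL^alt. -/
inductive LTLalt : AFml → Prop
  | taut {φ : AFml} : Tautology φ → LTLalt φ
  | nextK (φ ψ : AFml) : LTLalt ((next (φ.imp ψ)).imp ((next φ).imp (next ψ)))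
  | funAx (φ : AFml) : LTLalt (iff' (next (neg φ)) (neg (next φ)))
  | u2 (φ ψ : AFml) : LTLalt (iff' (untl φ ψ) (or' ψ (and' φ (next (untl φ ψ)))))
  | mp {φ ψ : AFml} : LTLalt (φ.imp ψ) → LTLalt φ → LTLalt ψ
  | nextNec {φ : AFml} : LTLalt φ → LTLalt (next φ)
  | untilInd {χ φ ψ : AFml} : LTLalt (χ.imp (and' (neg ψ) (next χ))) →
      LTLalt (χ.imp (neg (untl φ ψ)))

end AFml

/-!
Write `U := ⊤ U ¬φ`, so that `□φ = ¬U`. The right-to-left half of (U2) says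
`¬φ ∨ ○U → U`, hence `¬U → φ ∧ ¬○U`, and (fun) turns `¬○U` into `○¬U`.
The induction rule is not needed: the rest is propositional.
-/

namespace AFml

theorem LTLalt.of_tautology_imp {α β : AFml} (h : Tautology (α.imp β)) (hα : LTLalt α) :
    LTLalt β :=
  .mp (.taut h) hα

theorem LTLalt.of_tautology_imp₂ {α β γ : AFml} (h : Tautology (α.imp (β.imp γ)))
    (hα : LTLalt α) (hβ : LTLalt β) : LTLalt γ :=
  .mp (hα.of_tautology_imp h) hβ

theorem LTLalt.neg_next_imp_next_neg (χ : AFml) : LTLalt ((neg (next χ)).imp (next (neg χ))) := by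
  refine (LTLalt.funAx χ).of_tautology_imp fun v hb hi => ?_
  simp only [iff', and', or', neg, hi]
  tauto

theorem LTLalt.neg_diam_imp_neg_and_neg_next_diam (ψ : AFml) :
    LTLalt ((neg (diam ψ)).imp (and' (neg ψ) (neg (next (diam ψ))))) := by
  refine (LTLalt.u2 top ψ).of_tautology_imp fun v hb hi => ?_
  simp only [diam, iff', and', or', neg, top, hi]
  tauto

end AFml

theorem ltlalt_mix (φ : AFml) :
    AFml.LTLalt ((AFml.always φ).imp (AFml.and' φ (AFml.next (AFml.always φ)))) := by
  refine .of_tautology_imp₂ (fun v hb hi => ?_) (.neg_diam_imp_neg_and_neg_next_diam (AFml.neg φ))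
    (.neg_next_imp_next_neg (AFml.diam (AFml.neg φ)))
  simp only [AFml.always, AFml.and', AFml.or', AFml.neg, hi]
  tauto
end

section
/- In the alternative Hilbert system LTL^alt, the □-necessitation rule is derivable: if φ is derivable in LTL^alt, then □φ is derivable in LTL^alt, where □φ := ¬(⊤U¬φ). -/
/-! The invariant ⊤ witnesses □φ = ¬(⊤ U ¬φ) by until-induction: the premise ⊤ → (¬¬φ ∧ ○⊤)
of the rule holds because φ is derivable and ○⊤ follows from ⊤ by ○-necessitation. -/

namespace AFml.LTLalt

theorem of_tautology_imp_s8 {α β : AFml} (hαβ : Tautology (α.imp β)) (hα : LTLalt α) :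
    LTLalt β :=
  mp (taut hαβ) hα

theorem of_tautology_imp₂_s8 {α β γ : AFml} (hαβγ : Tautology (α.imp (β.imp γ)))
    (hα : LTLalt α) (hβ : LTLalt β) : LTLalt γ :=
  mp (of_tautology_imp_s8 hαβγ hα) hβ

theorem verum : LTLalt top :=
  taut fun v _ hi => by simp only [top, neg, hi]; exact id

theorem neg_neg {φ : AFml} (h : LTLalt φ) : LTLalt (neg (neg φ)) :=
  of_tautology_imp_s8 (fun v _ hi => by simp only [neg, hi]; tauto) h

theorem neg_untl (φ : AFml) {ψ : AFml} (hψ : LTLalt (neg ψ)) : LTLalt (neg (untl φ ψ)) := by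
  have hstep : LTLalt (top.imp (and' (neg ψ) (next top))) :=
    of_tautology_imp₂_s8 (fun v _ hi => by simp only [and', or', neg, top, hi]; tauto)
      hψ (nextNec verum)
  exact mp (untilInd hstep) verum

end AFml.LTLalt

theorem ltlalt_always_nec (φ : AFml) (h : AFml.LTLalt φ) :
    AFml.LTLalt (AFml.always φ) :=
  AFml.LTLalt.neg_untl AFml.top (AFml.LTLalt.neg_neg h)
end

section
/- For every agent i, formula φ, and justification term t, there is a justification term s(t) such that the formula [t]_i□φ → [s(t)]_i○φ is derivable in the Hilbert system J5LTL_CS extended with the principles (□-access) and (○-left) as additional axiom schemes. -/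
/-!
Take `s(t) = ⇚⇓t`. (□-access) turns `[t]_i□φ` into `□[⇓t]_iφ`; in LTL `□χ → ○χ`, since (mix)
gives `□χ → χ` and `□χ → ○□χ`, and `○` is monotone; finally (○-left) turns `○[⇓t]_iφ` into `[⇚⇓t]_i○φ`.
-/

/-- Justification terms: t ::= c | x | !t | ?t | t+t | t·t, extended with
unary operations ⇓ (dDown), ⇑ (dUp), ↓ (down), ⇛ (rright), ⇚ (lleft). -/
inductive JTm : Type
  | const : ℕ → JTm
  | var : ℕ → JTm
  | bang : JTm → JTm
  | quest : JTm → JTm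
  | plus : JTm → JTm → JTm
  | times : JTm → JTm → JTm
  | dDown : JTm → JTm   -- ⇓
  | dUp : JTm → JTm     -- ⇑
  | down : JTm → JTm    -- ↓
  | rright : JTm → JTm  -- ⇛
  | lleft : JTm → JTm   -- ⇚

/-- Formulas over h agents:
φ ::= P | ⊥ | φ→φ | ○φ | □φ | φUψ | [t]_i φ. -/
inductive JFml (h : ℕ) : Type
  | atom : ℕ → JFml h
  | bot : JFml h
  | imp : JFml h → JFml h → JFml h
  | next : JFml h → JFml h
  | always : JFml h → JFml h
  | untl : JFml h → JFml h → JFml h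
  | jbox : Fin h → JTm → JFml h → JFml h

namespace JFml

variable {h : ℕ}

/-- ¬φ := φ → ⊥ -/
def neg (φ : JFml h) : JFml h := φ.imp bot
/-- φ ∨ ψ := ¬φ → ψ -/
def or' (φ ψ : JFml h) : JFml h := (neg φ).imp ψ
/-- φ ∧ ψ := ¬(¬φ ∨ ¬ψ) -/
def and' (φ ψ : JFml h) : JFml h := neg (or' (neg φ) (neg ψ))
/-- φ ↔ ψ := (φ → ψ) ∧ (ψ → φ) -/
def iff' (φ ψ : JFml h) : JFml h := and' (φ.imp ψ) (ψ.imp φ)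
/-- ◇φ := ¬□¬φ -/
def diam (φ : JFml h) : JFml h := neg (always (neg φ))

/-- Propositional tautologies: true under every valuation that interprets
⊥ and → classically (all other formulas are treated as atoms). -/
def Tautology (φ : JFml h) : Prop :=
  ∀ v : JFml h → Prop, ¬ v bot → (∀ α β, v (imp α β) ↔ (v α → v β)) → v φ

/-- Axioms of J5LTL, extended by additional axiom schemes `Extra`. -/
inductive Axiom (Extra : JFml h → Prop) : JFml h → Prop
  | taut {φ : JFml h} : Tautology φ → Axiom Extra φ
  | nextK (φ ψ : JFml h) :
      Axiom Extra ((next (φ.imp ψ)).imp ((next φ).imp (next ψ)))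
  | alwaysK (φ ψ : JFml h) :
      Axiom Extra ((always (φ.imp ψ)).imp ((always φ).imp (always ψ)))
  | funAx (φ : JFml h) : Axiom Extra (iff' (next (neg φ)) (neg (next φ)))
  | mix (φ : JFml h) : Axiom Extra ((always φ).imp (and' φ (next (always φ))))
  | ind (φ : JFml h) :
      Axiom Extra ((always (φ.imp (next φ))).imp (φ.imp (always φ)))
  | u1 (φ ψ : JFml h) : Axiom Extra ((untl φ ψ).imp (diam ψ))
  | u2 (φ ψ : JFml h) :
      Axiom Extra (iff' (untl φ ψ) (or' ψ (and' φ (next (untl φ ψ)))))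
  | app (i : Fin h) (t s : JTm) (φ ψ : JFml h) :
      Axiom Extra ((jbox i t (φ.imp ψ)).imp
        ((jbox i s φ).imp (jbox i (t.times s) ψ)))
  | sum₁ (i : Fin h) (t s : JTm) (φ : JFml h) :
      Axiom Extra ((jbox i t φ).imp (jbox i (t.plus s) φ))
  | sum₂ (i : Fin h) (t s : JTm) (φ : JFml h) :
      Axiom Extra ((jbox i s φ).imp (jbox i (t.plus s) φ))
  | refl (i : Fin h) (t : JTm) (φ : JFml h) :
      Axiom Extra ((jbox i t φ).imp φ)
  | posIntro (i : Fin h) (t : JTm) (φ : JFml h) :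
      Axiom Extra ((jbox i t φ).imp (jbox i t.bang (jbox i t φ)))
  | negIntro (i : Fin h) (t : JTm) (φ : JFml h) :
      Axiom Extra ((neg (jbox i t φ)).imp (jbox i t.quest (neg (jbox i t φ))))
  | extra {φ : JFml h} : Extra φ → Axiom Extra φ

/-- `CS` is a constant specification (w.r.t. the axioms extended by `Extra`):
a set of formulas `[c]_i φ` where `c` is a proof constant and `φ` an axiom. -/
def IsCS (Extra : JFml h → Prop) (CS : Set (JFml h)) : Prop :=
  ∀ ψ ∈ CS, ∃ (i : Fin h) (c : ℕ) (φ : JFml h),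
    ψ = jbox i (JTm.const c) φ ∧ Axiom Extra φ

/-- `CS` is axiomatically appropriate: for every axiom `φ` and agent `i`
there is a constant `c` with `[c]_i φ ∈ CS`. -/
def AxAppropriate (Extra : JFml h → Prop) (CS : Set (JFml h)) : Prop :=
  ∀ φ : JFml h, Axiom Extra φ → ∀ i : Fin h, ∃ c : ℕ,
    jbox i (JTm.const c) φ ∈ CS

/-- The Hilbert system J5LTL_CS extended with additional axiom schemes `Extra`. -/
inductive Deriv (Extra : JFml h → Prop) (CS : Set (JFml h)) : JFml h → Prop
  | ax {φ : JFml h} : Axiom Extra φ → Deriv Extra CS φ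
  | mp {φ ψ : JFml h} : Deriv Extra CS (φ.imp ψ) → Deriv Extra CS φ →
      Deriv Extra CS ψ
  | nextNec {φ : JFml h} : Deriv Extra CS φ → Deriv Extra CS (next φ)
  | alwaysNec {φ : JFml h} : Deriv Extra CS φ → Deriv Extra CS (always φ)
  | constNec {φ : JFml h} : φ ∈ CS → Deriv Extra CS φ

/-- The principle (□-access): [t]_i□φ → □[⇓t]_iφ. -/
def BoxAccess : JFml h → Prop := fun χ =>
  ∃ (i : Fin h) (t : JTm) (φ : JFml h),
    χ = (jbox i t (always φ)).imp (always (jbox i t.dDown φ))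

/-- The principle (generalize): □[t]_iφ → [⇑t]_i□φ. -/
def Generalize : JFml h → Prop := fun χ =>
  ∃ (i : Fin h) (t : JTm) (φ : JFml h),
    χ = (always (jbox i t φ)).imp (jbox i t.dUp (always φ))

/-- The principle (○-access): [t]_i□φ → [↓t]_i○φ. -/
def NextAccess : JFml h → Prop := fun χ =>
  ∃ (i : Fin h) (t : JTm) (φ : JFml h),
    χ = (jbox i t (always φ)).imp (jbox i t.down (next φ))

/-- The principle (○-left): ○[t]_iφ → [⇚t]_i○φ. -/
def NextLeft : JFml h → Prop := fun χ =>
  ∃ (i : Fin h) (t : JTm) (φ : JFml h),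
    χ = (next (jbox i t φ)).imp (jbox i t.lleft (next φ))

end JFml

namespace JFml

variable {h : ℕ} {Extra : JFml h → Prop} {CS : Set (JFml h)}

theorem tautology_imp_trans (a b c : JFml h) :
    Tautology ((a.imp b).imp ((b.imp c).imp (a.imp c))) := by
  intro v _ himp
  simp only [himp]
  tauto

theorem tautology_and_left (a b : JFml h) : Tautology ((and' a b).imp a) := by
  intro v hbot himp
  simp only [and', or', neg, himp]
  tauto

theorem tautology_and_right (a b : JFml h) : Tautology ((and' a b).imp b) := by
  intro v hbot himp
  simp only [and', or', neg, himp]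
  tauto

namespace Deriv

theorem imp_trans {a b c : JFml h} (hab : Deriv Extra CS (a.imp b))
    (hbc : Deriv Extra CS (b.imp c)) : Deriv Extra CS (a.imp c) :=
  .mp (.mp (.ax (.taut (tautology_imp_trans a b c))) hab) hbc

theorem next_imp_next {a b : JFml h} (hab : Deriv Extra CS (a.imp b)) :
    Deriv Extra CS ((next a).imp (next b)) :=
  .mp (.ax (.nextK a b)) (.nextNec hab)

theorem always_imp_self (φ : JFml h) : Deriv Extra CS ((always φ).imp φ) :=
  (Deriv.ax (.mix φ)).imp_trans (.ax (.taut (tautology_and_left _ _)))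

theorem always_imp_next_always (φ : JFml h) :
    Deriv Extra CS ((always φ).imp (next (always φ))) :=
  (Deriv.ax (.mix φ)).imp_trans (.ax (.taut (tautology_and_right _ _)))

theorem always_imp_next (φ : JFml h) : Deriv Extra CS ((always φ).imp (next φ)) :=
  (always_imp_next_always φ).imp_trans (next_imp_next (always_imp_self φ))

end Deriv

end JFml

open JFml in
theorem jltl_box_to_next_general {h : ℕ} (CS : Set (JFml h))
    (i : Fin h) (t : JTm) (φ : JFml h) :
    ∃ s : JTm,
      Deriv (fun χ => BoxAccess χ ∨ NextLeft χ) CS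
        ((jbox i t (always φ)).imp (jbox i s (next φ))) := by
  refine ⟨t.dDown.lleft, ?_⟩
  have boxAccess : Deriv (fun χ => BoxAccess χ ∨ NextLeft χ) CS
      ((jbox i t (always φ)).imp (always (jbox i t.dDown φ))) :=
    .ax (.extra (.inl ⟨i, t, φ, rfl⟩))
  have nextLeft : Deriv (fun χ => BoxAccess χ ∨ NextLeft χ) CS
      ((next (jbox i t.dDown φ)).imp (jbox i t.dDown.lleft (next φ))) :=
    .ax (.extra (.inr ⟨i, t.dDown, φ, rfl⟩))
  exact (boxAccess.imp_trans (Deriv.always_imp_next _)).imp_trans nextLeft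

open JFml in
/-- For every agent i, formula φ and term t there is a term s(t) with
(□-access), (○-left) ⊢_CS [t]_i□φ → [s(t)]_i○φ. -/
theorem jltl_box_to_next {h : ℕ} (CS : Set (JFml h))
    (hCS : IsCS (fun χ => BoxAccess χ ∨ NextLeft χ) CS)
    (i : Fin h) (t : JTm) (φ : JFml h) :
    ∃ s : JTm,
      Deriv (fun χ => BoxAccess χ ∨ NextLeft χ) CS
        ((jbox i t (always φ)).imp (jbox i s (next φ))) :=
  jltl_box_to_next_general CS i t φ
end

section
/- Let CS be an axiomatically appropriate constant specification. For every agent i, formula φ, and justification term t, there is a justification term s(t) such that the formula [t]_i□φ → [s(t)]_i□□φ is derivable in J5LTL_CS extended with the principle (generalize) as an additional axiom scheme. -/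
namespace JFml

variable {h : ℕ} {Extra : JFml h → Prop} {CS : Set (JFml h)}

theorem tautology_imp_and_right_of_imp (X Y Z : JFml h) :
    Tautology ((X.imp (and' Y Z)).imp (X.imp Z)) := by
  intro v _ himp
  simp only [and', or', neg, himp]
  tauto

theorem Deriv.jbox_times {i : Fin h} {t s : JTm} {φ ψ : JFml h}
    (ht : Deriv Extra CS (jbox i t (φ.imp ψ))) (hs : Deriv Extra CS (jbox i s φ)) :
    Deriv Extra CS (jbox i (t.times s) ψ) :=
  .mp (.mp (.ax (.app i t s φ ψ)) ht) hs

theorem AxAppropriate.exists_deriv_jbox (hApp : AxAppropriate Extra CS) {φ : JFml h}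
    (hφ : Axiom Extra φ) (i : Fin h) : ∃ c : ℕ, Deriv Extra CS (jbox i (.const c) φ) :=
  (hApp φ hφ i).imp fun _ hc => .constNec hc

theorem Deriv.jbox_dUp_always (hGen : ∀ χ, Generalize χ → Extra χ) {i : Fin h} {u : JTm}
    {ψ : JFml h} (hu : Deriv Extra CS (jbox i u ψ)) :
    Deriv Extra CS (jbox i u.dUp (always ψ)) :=
  .mp (.ax (.extra (hGen _ ⟨i, u, ψ, rfl⟩))) (.alwaysNec hu)

theorem AxAppropriate.exists_jbox_always_imp_next_always (hApp : AxAppropriate Extra CS)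
    (i : Fin h) (φ : JFml h) :
    ∃ u : JTm, Deriv Extra CS (jbox i u ((always φ).imp (next (always φ)))) := by
  obtain ⟨c₁, hc₁⟩ := hApp.exists_deriv_jbox
    (.taut (tautology_imp_and_right_of_imp (always φ) φ (next (always φ)))) i
  obtain ⟨c₂, hc₂⟩ := hApp.exists_deriv_jbox (.mix φ) i
  exact ⟨_, hc₁.jbox_times hc₂⟩

/-- (generalize) lifts the justified `□φ → ○□φ` obtained from (mix) to a justified
`□(□φ → ○□φ)`, which is the premise of (ind). -/
theorem AxAppropriate.exists_jbox_always_imp_always_always (hApp : AxAppropriate Extra CS)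
    (hGen : ∀ χ, Generalize χ → Extra χ) (i : Fin h) (φ : JFml h) :
    ∃ s : JTm, Deriv Extra CS (jbox i s ((always φ).imp (always (always φ)))) := by
  obtain ⟨u, hu⟩ := hApp.exists_jbox_always_imp_next_always i φ
  obtain ⟨c, hc⟩ := hApp.exists_deriv_jbox (.ind (always φ)) i
  exact ⟨_, hc.jbox_times (hu.jbox_dUp_always hGen)⟩

end JFml

open JFml in
theorem jltl_box_to_boxbox_general {h : ℕ} (CS : Set (JFml h))
    (hApp : AxAppropriate Generalize CS)
    (i : Fin h) (t : JTm) (φ : JFml h) :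
    ∃ s : JTm,
      Deriv Generalize CS
        ((jbox i t (always φ)).imp (jbox i s (always (always φ)))) := by
  obtain ⟨s, hs⟩ := hApp.exists_jbox_always_imp_always_always (fun _ hχ => hχ) i φ
  exact ⟨s.times t, .mp (.ax (.app i s t _ _)) hs⟩

open JFml in
/-- For every agent i, formula φ and term t there is a term s(t) with
(generalize) ⊢_CS [t]_i□φ → [s(t)]_i□□φ, for axiomatically appropriate CS. -/
theorem jltl_box_to_boxbox {h : ℕ} (CS : Set (JFml h))
    (hCS : IsCS Generalize CS) (hApp : AxAppropriate Generalize CS)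
    (i : Fin h) (t : JTm) (φ : JFml h) :
    ∃ s : JTm,
      Deriv Generalize CS
        ((jbox i t (always φ)).imp (jbox i s (always (always φ)))) :=
  jltl_box_to_boxbox_general CS hApp i t φ
end
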